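/- Let X be a topological space, Y a Fréchet space, α a countable ordinal, and f : X → Y a Baire-α function. Then there exists a sequence (G_n)_{n=1}^∞ of Σ_α-strips in X × Y such that ⋂_{n=1}^∞ G_n = gr(f) and for each x ∈ X the diameter of the vertical section G_n(x) tends to 0 as n → ∞. -/

import Mathlib

open Filter Topology

/-- The Baire hierarchy: `IsBaireClass 0 f` iff `f` is continuous, and for a (countable)
ordinal `α > 0`, `IsBaireClass α f` iff `f` is the pointwise limit of a sequence of
functions, the `n`-th of which is of Baire class `β n` for some `β n < α`. -/
inductive IsBaireClass {X Y : Type*} [TopologicalSpace X] [TopologicalSpace Y] :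
    Ordinal → (X → Y) → Prop
  | cont (f : X → Y) : Continuous f → IsBaireClass 0 f
  | lim (α : Ordinal) (f : X → Y) (g : ℕ → X → Y) (β : ℕ → Ordinal) :
      0 < α → (∀ n, β n < α) → (∀ n, IsBaireClass (β n) (g n)) →
      (∀ x, Filter.Tendsto (fun n => g n x) Filter.atTop (nhds (f x))) →
      IsBaireClass α f

/-- The additive Borel classes: `IsSigmaClass 1 s` iff `s` is open, and for an ordinal
`α > 1`, `IsSigmaClass α s` iff `s` is a countable union of sets, the `n`-th of which
is of multiplicative class `β n` (i.e. its complement is of additive class `β n`)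
for some `β n < α`. -/
inductive IsSigmaClass {X : Type*} [TopologicalSpace X] : Ordinal → Set X → Prop
  | open_ (s : Set X) : IsOpen s → IsSigmaClass 1 s
  | union (α : Ordinal) (s : ℕ → Set X) (β : ℕ → Ordinal) :
      1 < α → (∀ n, β n < α) → (∀ n, IsSigmaClass (β n) (s n)ᶜ) →
      IsSigmaClass α (⋃ n, s n)

/-- `s` is of multiplicative class `α` iff its complement is of additive class `α`. -/
def IsPiClass {X : Type*} [TopologicalSpace X] (α : Ordinal) (s : Set X) : Prop :=
  IsSigmaClass α sᶜ

/-!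
Write `f = lim gₙ` with `gₙ` of class `< α`, and fix convex open neighbourhoods `Wₙ` of `0`
shrinking to `0`. Take for `Gₙ` the strip whose section over `x` is
`Wₙ + conv {gₘ x | m ≥ n}`. These sections are convex and contain `f x`; they shrink to `f x`
because a convex neighbourhood of `f x` eventually contains every `gₘ x`, hence their hull.

To see that `Gₙ` is `Σ_α`, replace the hull by the countably many rational convex combinations
`c` of the `gₘ`, which are again of class `< α`. They are dense in the hull and `Wₙ` is open, so
the sections do not change, and `Gₙ = ⋃_c {(x, y) | y - c x ∈ Wₙ}` is a countable union of
preimages of an open set under functions of class `< α`.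
-/

open Set Pointwise
open scoped ENNReal

namespace IsBaireClass

variable {X Y Z M : Type*} [TopologicalSpace X] [TopologicalSpace Y] [TopologicalSpace Z]
  [TopologicalSpace M]

theorem exists_tendsto {α : Ordinal} {f : X → Y} (hf : IsBaireClass α f) (hα : α ≠ 0) :
    ∃ g : ℕ → X → Y, (∀ n, ∃ β < α, IsBaireClass β (g n)) ∧
      ∀ x, Tendsto (fun n => g n x) atTop (𝓝 (f x)) := by
  cases hf with
  | cont => exact absurd rfl hα
  | lim _ _ g β _ hβ hg hlim => exact ⟨g, fun n => ⟨β n, hβ n, hg n⟩, hlim⟩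

theorem comp_continuous {γ : Ordinal} {u : X → Y} (hu : IsBaireClass γ u) {e : Z → X}
    (he : Continuous e) : IsBaireClass γ (u ∘ e) := by
  induction hu with
  | cont u hu => exact .cont _ (hu.comp he)
  | lim γ u g β hγ hβ _ hlim ih =>
    exact .lim γ _ (fun n => g n ∘ e) β hγ hβ ih fun z => hlim (e z)

theorem continuous_comp_prodMk {φ : X → Y → M} (hφ : Continuous (Function.uncurry φ))
    {δ : Ordinal} {v : X → Y} (hv : IsBaireClass δ v) :
    IsBaireClass δ fun x => φ x (v x) := by
  induction hv with
  | cont v hv => exact .cont _ (hφ.comp (continuous_id.prodMk hv))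
  | lim δ v g β hδ hβ _ hlim ih =>
    exact .lim δ _ (fun n x => φ x (g n x)) β hδ hβ ih fun x =>
      (hφ.tendsto (x, v x)).comp (tendsto_const_nhds.prodMk_nhds (hlim x))

theorem comp₂ {φ : Y → Z → M} (hφ : Continuous (Function.uncurry φ)) {γ : Ordinal}
    {u : X → Y} (hu : IsBaireClass γ u) {δ : Ordinal} {v : X → Z} (hv : IsBaireClass δ v) :
    IsBaireClass (max γ δ) fun x => φ (u x) (v x) := by
  induction hu generalizing δ v with
  | cont u hu =>
    rw [max_eq_right zero_le]
    exact continuous_comp_prodMk (φ := fun x => φ (u x))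
      (hφ.comp ((hu.comp continuous_fst).prodMk continuous_snd)) hv
  | lim γ u us βu hγ hβu hus hlimu ih =>
    cases hv with
    | cont v hv =>
      rw [max_eq_left zero_le]
      exact continuous_comp_prodMk (φ := fun x y => φ y (v x))
        (hφ.comp (continuous_snd.prodMk (hv.comp continuous_fst)))
        (.lim γ u us βu hγ hβu hus hlimu)
    | lim δ v vs βv hδ hβv hvs hlimv =>
      exact .lim _ _ (fun n x => φ (us n x) (vs n x)) (fun n => max (βu n) (βv n))
        (hγ.trans_le (le_max_left _ _)) (fun n => max_lt_max (hβu n) (hβv n))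
        (fun n => ih n (hvs n)) fun x =>
          (hφ.tendsto (u x, v x)).comp ((hlimu x).prodMk_nhds (hlimv x))

end IsBaireClass

namespace IsSigmaClass

variable {X : Type*} [TopologicalSpace X] {α : Ordinal} {s : Set X}

theorem isOpen (h : IsSigmaClass 1 s) : IsOpen s := by
  cases h with
  | open_ _ hs => exact hs
  | union _ _ _ h1 => exact absurd h1 (lt_irrefl 1)

theorem exists_iUnion_eq (h : IsSigmaClass α s) (hα : 1 < α) :
    ∃ (t : ℕ → Set X) (β : ℕ → Ordinal), (∀ i, β i < α) ∧
      (∀ i, IsSigmaClass (β i) (t i)ᶜ) ∧ s = ⋃ i, t i := by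
  cases h with
  | open_ _ _ => exact absurd hα (lt_irrefl 1)
  | union _ t β _ hβ ht => exact ⟨t, β, hβ, ht, rfl⟩

theorem iUnion (hα : 1 ≤ α) {s : ℕ → Set X} (h : ∀ n, IsSigmaClass α (s n)) :
    IsSigmaClass α (⋃ n, s n) := by
  rcases hα.eq_or_lt with rfl | hα
  · exact .open_ _ (isOpen_iUnion fun n => (h n).isOpen)
  choose t β hβ ht hs using fun n => (h n).exists_iUnion_eq hα
  have hflat : ⋃ n, s n = ⋃ m : ℕ, t m.unpair.1 m.unpair.2 := by
    rw [Nat.surjective_unpair.iUnion_comp fun p => t p.1 p.2, iUnion_prod']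
    simp only [hs]
  rw [hflat]
  exact .union α _ _ hα (fun m => hβ _ _) fun m => ht _ _

end IsSigmaClass

theorem IsOpen.exists_isClosed_subset_mem_nhds {M : Type*} [PseudoEMetricSpace M] {U : Set M}
    (hU : IsOpen U) :
    ∃ F : ℕ → Set M, (∀ i, IsClosed (F i)) ∧ (∀ i, F i ⊆ U) ∧ ∀ x ∈ U, ∃ i, F i ∈ 𝓝 x := by
  refine ⟨fun i => {m | (i : ℝ≥0∞)⁻¹ ≤ Metric.infEDist m Uᶜ},
    fun i => isClosed_le continuous_const Metric.continuous_infEDist, fun i m hm => ?_,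
    fun x hx => ?_⟩
  · by_contra hmU
    rw [mem_ofPred_eq, Metric.infEDist_zero_of_mem hmU, nonpos_iff_eq_zero] at hm
    exact ENNReal.inv_ne_zero.2 (ENNReal.natCast_ne_top i) hm
  · have hpos : Metric.infEDist x Uᶜ ≠ 0 := fun h0 =>
      (Metric.mem_iff_infEDist_zero_of_closed hU.isClosed_compl).2 h0 hx
    obtain ⟨i, hi⟩ := ENNReal.exists_inv_nat_lt hpos
    refine ⟨i, ?_⟩
    filter_upwards [(isOpen_lt continuous_const Metric.continuous_infEDist).mem_nhds hi]
      with m hm using hm.le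

theorem preimage_eq_iUnion_iInter_of_tendsto {Z M : Type*} [TopologicalSpace M]
    {g : ℕ → Z → M} {h : Z → M} (hlim : ∀ z, Tendsto (fun j => g j z) atTop (𝓝 (h z)))
    {U : Set M} {F : ℕ → Set M} (hF : ∀ i, IsClosed (F i)) (hFU : ∀ i, F i ⊆ U)
    (hUF : ∀ x ∈ U, ∃ i, F i ∈ 𝓝 x) :
    h ⁻¹' U = ⋃ i, ⋃ k, ⋂ j, g (j + k) ⁻¹' F i := by
  ext z
  simp only [mem_preimage, mem_iUnion, mem_iInter]
  constructor
  · intro hz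
    obtain ⟨i, hi⟩ := hUF _ hz
    obtain ⟨k, hk⟩ := eventually_atTop.1 ((hlim z).eventually hi)
    exact ⟨i, k, fun j => hk _ (Nat.le_add_left k j)⟩
  · rintro ⟨i, k, hk⟩
    refine hFU i ((hF i).mem_of_tendsto (hlim z) (eventually_atTop.2 ⟨k, fun j hj => ?_⟩))
    simpa [Nat.sub_add_cancel hj] using hk (j - k)

theorem isSigmaClass_preimage_of_tendsto {Z M : Type*} [TopologicalSpace Z]
    [PseudoEMetricSpace M] {g : ℕ → Z → M} {h : Z → M}
    (hlim : ∀ z, Tendsto (fun j => g j z) atTop (𝓝 (h z))) {γ α : Ordinal} (hγ : 1 ≤ γ)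
    (hγα : γ < α) (hg : ∀ j V, IsOpen V → IsSigmaClass γ (g j ⁻¹' V)) {U : Set M}
    (hU : IsOpen U) : IsSigmaClass α (h ⁻¹' U) := by
  obtain ⟨F, hF, hFU, hUF⟩ := hU.exists_isClosed_subset_mem_nhds
  rw [preimage_eq_iUnion_iInter_of_tendsto hlim hF hFU hUF]
  refine .iUnion (hγ.trans hγα.le) fun i =>
    .union α _ (fun _ => γ) (hγ.trans_lt hγα) (fun _ => hγα) fun k => ?_
  simp only [compl_iInter, ← preimage_compl]
  exact .iUnion hγ fun j => hg _ _ (hF i).isOpen_compl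

theorem IsBaireClass.isSigmaClass_preimage {Z M : Type*} [TopologicalSpace Z]
    [PseudoEMetricSpace M] {γ α : Ordinal} {h : Z → M} (hh : IsBaireClass γ h)
    (hγα : γ < α) {U : Set M} (hU : IsOpen U) : IsSigmaClass α (h ⁻¹' U) := by
  induction hh generalizing α U with
  | cont h hc =>
    rcases (Order.one_le_iff_pos.2 hγα).eq_or_lt with rfl | hα
    · exact .open_ _ (hU.preimage hc)
    · exact isSigmaClass_preimage_of_tendsto (g := fun _ => h) (fun z => tendsto_const_nhds)
        le_rfl hα (fun _ V hV => .open_ _ (hV.preimage hc)) hU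
  | lim γ h g β hγ hβ _ hlim ih =>
    exact isSigmaClass_preimage_of_tendsto hlim (Order.one_le_iff_pos.2 hγ) hγα
      (fun j V hV => ih j (hβ j) hV) hU

section RatConvex

variable {E : Type*} [AddCommGroup E] [Module ℝ E] {s t : Set E}

def IsRatConvex (s : Set E) : Prop :=
  ∀ ⦃x⦄, x ∈ s → ∀ ⦃y⦄, y ∈ s → ∀ ⦃q : ℚ⦄, 0 ≤ q → q ≤ 1 →
    (q : ℝ) • x + (1 - (q : ℝ)) • y ∈ s

theorem Convex.isRatConvex (hs : Convex ℝ s) : IsRatConvex s := fun _ hx _ hy _ h0 h1 =>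
  hs hx hy (Rat.cast_nonneg.2 h0) (sub_nonneg.2 (by exact_mod_cast h1)) (add_sub_cancel _ _)

theorem IsRatConvex.image {F : Type*} [AddCommGroup F] [Module ℝ F] (hs : IsRatConvex s)
    (L : E →ₗ[ℝ] F) : IsRatConvex (L '' s) := by
  rintro _ ⟨x, hx, rfl⟩ _ ⟨y, hy, rfl⟩ q h0 h1
  exact ⟨_, hs hx hy h0 h1, by simp only [map_add, map_smul]⟩

theorem IsRatConvex.convex_closure [TopologicalSpace E] [ContinuousAdd E] [ContinuousSMul ℝ E]
    (hs : IsRatConvex s) : Convex ℝ (closure s) := by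
  intro x hx y hy a b ha hb hab
  obtain rfl : b = 1 - a := by linarith
  have hrat : ∀ q : ℚ, 0 ≤ q → q ≤ 1 → (q : ℝ) • x + (1 - (q : ℝ)) • y ∈ closure s :=
    fun q h0 h1 => map_mem_closure₂ (f := fun u v => (q : ℝ) • u + (1 - (q : ℝ)) • v)
      (by fun_prop) hx hy fun _ hu _ hv => hs hu hv h0 h1
  have ha' : a ∈ closure (Ioo 0 1 ∩ range ((↑) : ℚ → ℝ)) :=
    closure_minimal (Rat.denseRange_cast.open_subset_closure_inter isOpen_Ioo) isClosed_closure
      (by rw [closure_Ioo zero_ne_one]; exact ⟨ha, by linarith⟩)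
  refine closure_minimal le_rfl isClosed_closure
    (map_mem_closure (f := fun r : ℝ => r • x + (1 - r) • y) (by fun_prop) ha' ?_)
  rintro _ ⟨⟨h0, h1⟩, q, rfl⟩
  exact hrat q (by exact_mod_cast h0.le) (by exact_mod_cast h1.le)

inductive ratConvexHull (s : Set E) : Set E
  | subset {x : E} : x ∈ s → ratConvexHull s x
  | combo {x y : E} {q : ℚ} : 0 ≤ q → q ≤ 1 → ratConvexHull s x → ratConvexHull s y →
      ratConvexHull s ((q : ℝ) • x + (1 - (q : ℝ)) • y)

theorem subset_ratConvexHull : s ⊆ ratConvexHull s := fun _ => .subset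

theorem isRatConvex_ratConvexHull : IsRatConvex (ratConvexHull s) :=
  fun _ hx _ hy _ h0 h1 => .combo h0 h1 hx hy

theorem ratConvexHull_min (ht : IsRatConvex t) (hst : s ⊆ t) : ratConvexHull s ⊆ t := by
  intro x hx
  induction hx with
  | subset hx => exact hst hx
  | combo h0 h1 _ _ ihx ihy => exact ht ihx ihy h0 h1

theorem ratConvexHull_subset_convexHull : ratConvexHull s ⊆ convexHull ℝ s :=
  ratConvexHull_min (convex_convexHull ℝ s).isRatConvex (subset_convexHull ℝ s)

theorem Set.Countable.ratConvexHull (hs : s.Countable) : (ratConvexHull s).Countable := by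
  -- `S k` contains the rational combinations of nesting depth at most `k`.
  let S : ℕ → Set E := fun k => Nat.rec s (fun _ t =>
    t ∪ ⋃ q : ℚ, Set.image2 (fun x y => (q : ℝ) • x + (1 - (q : ℝ)) • y) t t) k
  have hS : Monotone S := monotone_nat_of_le_succ fun _ => subset_union_left
  refine (countable_iUnion fun k => ?_).mono (ratConvexHull_min ?_ (subset_iUnion S 0))
  · induction k with
    | zero => exact hs
    | succ k ih => exact ih.union (countable_iUnion fun q => ih.image2 ih _)
  · intro x hx y hy q _ _
    obtain ⟨k, hk⟩ := mem_iUnion.1 hx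
    obtain ⟨l, hl⟩ := mem_iUnion.1 hy
    exact mem_iUnion.2 ⟨max k l + 1, Or.inr (mem_iUnion.2 ⟨q,
      mem_image2_of_mem (hS (le_max_left k l) hk) (hS (le_max_right k l) hl)⟩)⟩

theorem IsOpen.add_convexHull_eq [TopologicalSpace E] [IsTopologicalAddGroup E]
    [ContinuousSMul ℝ E] {W D : Set E} (hW : IsOpen W) (hsD : s ⊆ D) (hD : IsRatConvex D)
    (hDs : D ⊆ convexHull ℝ s) : W + convexHull ℝ s = W + D := by
  refine Subset.antisymm ?_ (add_subset_add_left hDs)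
  rw [← hW.add_closure D]
  exact add_subset_add_left (convexHull_min (hsD.trans subset_closure) hD.convex_closure)

end RatConvex

section Strip

variable {X Y : Type*} [AddCommGroup Y] [Module ℝ Y]

def convexHullStrip (W : Set Y) (g : ℕ → X → Y) : Set (X × Y) :=
  {p | p.2 ∈ W + convexHull ℝ (range fun m => g m p.1)}

theorem setOf_mem_convexHullStrip (W : Set Y) (g : ℕ → X → Y) (x : X) :
    {y | (x, y) ∈ convexHullStrip W g} = W + convexHull ℝ (range fun m => g m x) :=
  rfl

theorem isRatConvex_setOf_isBaireClass [TopologicalSpace X] [TopologicalSpace Y]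
    [ContinuousAdd Y] [ContinuousSMul ℝ Y] (α : Ordinal) :
    IsRatConvex {u : X → Y | ∃ β < α, IsBaireClass β u} := by
  rintro u ⟨β₁, h₁, hu⟩ v ⟨β₂, h₂, hv⟩ q - -
  exact ⟨max β₁ β₂, max_lt h₁ h₂,
    hu.comp₂ (φ := fun a b => (q : ℝ) • a + (1 - (q : ℝ)) • b) (by fun_prop) hv⟩

theorem exists_seq_isBaireClass_add_convexHull_eq [TopologicalSpace X] [TopologicalSpace Y]
    [IsTopologicalAddGroup Y] [ContinuousSMul ℝ Y] {W : Set Y} (hW : IsOpen W) {α : Ordinal}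
    {g : ℕ → X → Y} (hg : ∀ m, ∃ β < α, IsBaireClass β (g m)) :
    ∃ c : ℕ → X → Y, (∀ m, ∃ β < α, IsBaireClass β (c m)) ∧
      ∀ x, W + convexHull ℝ (range fun m => g m x) = W + range fun m => c m x := by
  obtain ⟨c, hc⟩ : ∃ c : ℕ → X → Y, ratConvexHull (range g) = range c :=
    (countable_range g).ratConvexHull.exists_eq_range
      ⟨g 0, subset_ratConvexHull (mem_range_self 0)⟩
  refine ⟨c, fun m => ratConvexHull_min (isRatConvex_setOf_isBaireClass α)
    (range_subset_iff.2 hg) (hc ▸ mem_range_self m), fun x => ?_⟩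
  let L : (X → Y) →ₗ[ℝ] Y := LinearMap.proj x
  have hs : L '' range g = range fun m => g m x := (range_comp L g).symm
  have hD : L '' ratConvexHull (range g) = range fun m => c m x := by
    rw [hc, ← range_comp]; rfl
  rw [← hs, ← hD]
  exact hW.add_convexHull_eq (image_mono subset_ratConvexHull)
    (isRatConvex_ratConvexHull.image L)
    (by rw [← L.image_convexHull]; exact image_mono ratConvexHull_subset_convexHull)

theorem isSigmaClass_convexHullStrip [TopologicalSpace X] [PseudoEMetricSpace Y]
    [IsTopologicalAddGroup Y] [ContinuousSMul ℝ Y] {W : Set Y} (hW : IsOpen W) {α : Ordinal}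
    {g : ℕ → X → Y} (hg : ∀ m, ∃ β < α, IsBaireClass β (g m)) :
    IsSigmaClass α (convexHullStrip W g) := by
  obtain ⟨c, hcB, hsec⟩ := exists_seq_isBaireClass_add_convexHull_eq hW hg
  have hstrip : convexHullStrip W g = ⋃ m, (fun p : X × Y => p.2 - c m p.1) ⁻¹' W := by
    ext ⟨x, y⟩
    simp only [convexHullStrip, mem_ofPred_eq, hsec, Set.mem_add, mem_iUnion, mem_preimage]
    constructor
    · rintro ⟨w, hw, _, ⟨m, rfl⟩, rfl⟩
      exact ⟨m, by simpa using hw⟩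
    · rintro ⟨m, hm⟩
      exact ⟨_, hm, _, ⟨m, rfl⟩, sub_add_cancel y _⟩
  obtain ⟨β, hβ, -⟩ := hg 0
  rw [hstrip]
  refine .iUnion (Order.one_le_iff_pos.2 (hβ.trans_le' zero_le)) fun m => ?_
  obtain ⟨γ, hγ, hcm⟩ := hcB m
  have hB := (hcm.comp_continuous continuous_fst).comp₂ (φ := fun a b => b - a) (by fun_prop)
    (.cont _ continuous_snd)
  rw [max_eq_left zero_le] at hB
  exact hB.isSigmaClass_preimage hγ hW

variable [TopologicalSpace Y]

theorem mem_add_convexHull_of_tendsto [IsTopologicalAddGroup Y] {W : Set Y} (hW : W ∈ 𝓝 0)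
    {p : ℕ → Y} {a : Y} (hp : Tendsto p atTop (𝓝 a)) : a ∈ W + convexHull ℝ (range p) := by
  have hlim : Tendsto (fun m => a - p m) atTop (𝓝 0) := by
    simpa using (tendsto_const_nhds (x := a)).sub hp
  obtain ⟨m, hm⟩ := (hlim.eventually hW).exists
  exact ⟨_, hm, _, subset_convexHull ℝ _ (mem_range_self m), sub_add_cancel a _⟩

theorem tendsto_add_convexHull_smallSets [ContinuousAdd Y] [LocallyConvexSpace ℝ Y]
    {W : ℕ → Set Y} (hW : Tendsto W atTop (𝓝 0).smallSets) {p : ℕ → Y} {a : Y}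
    (hp : Tendsto p atTop (𝓝 a)) :
    Tendsto (fun n => W n + convexHull ℝ (range fun m => p (m + n))) atTop (𝓝 a).smallSets := by
  rw [tendsto_smallSets_iff]
  intro V hV
  obtain ⟨V₁, hV₁, V₂, hV₂, hV⟩ :=
    mem_nhds_prod_iff.1 (continuous_add.tendsto ((0 : Y), a) (by rwa [zero_add]))
  obtain ⟨C, ⟨hC, hCconv⟩, hCV₂⟩ :=
    (LocallyConvexSpace.convex_basis (𝕜 := ℝ) a).mem_iff.1 hV₂
  obtain ⟨N, hN⟩ := eventually_atTop.1 (hp hC)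
  filter_upwards [tendsto_smallSets_iff.1 hW V₁ hV₁, eventually_ge_atTop N] with n hWn hn
  rintro _ ⟨w, hw, c, hc, rfl⟩
  have hcC : c ∈ C := convexHull_min (range_subset_iff.2 fun m => hN _ (by omega)) hCconv hc
  exact hV (mk_mem_prod (hWn hw) (hCV₂ hcC))

end Strip

theorem iInter_eq_singleton_of_tendsto_smallSets {ι M : Type*} [TopologicalSpace M] [T1Space M]
    {l : Filter ι} [l.NeBot] {s : ι → Set M} {a : M} (h : Tendsto s l (𝓝 a).smallSets)
    (ha : ∀ i, a ∈ s i) : ⋂ i, s i = {a} := by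
  refine Subset.antisymm (fun y hy => ?_) (singleton_subset_iff.2 (mem_iInter.2 ha))
  by_contra hne
  obtain ⟨i, hi⟩ := (tendsto_smallSets_iff.1 h _
    (isOpen_compl_singleton.mem_nhds (Ne.symm hne))).exists
  exact hi (mem_iInter.1 hy i) rfl

theorem tendsto_ediam_of_tendsto_smallSets {ι M : Type*} [PseudoEMetricSpace M] {l : Filter ι}
    {s : ι → Set M} {a : M} (h : Tendsto s l (𝓝 a).smallSets) :
    Tendsto (fun i => Metric.ediam (s i)) l (𝓝 0) := by
  rw [ENNReal.tendsto_nhds_zero]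
  intro ε hε
  filter_upwards [tendsto_smallSets_iff.1 h _ (Metric.eball_mem_nhds a (ENNReal.half_pos hε.ne'))]
    with i hi
  calc Metric.ediam (s i) ≤ Metric.ediam (Metric.eball a (ε / 2)) := Metric.ediam_mono hi
    _ ≤ 2 * (ε / 2) := Metric.ediam_eball_le
    _ = ε := ENNReal.mul_div_cancel two_ne_zero ENNReal.ofNat_ne_top

theorem baire_graph_sigmaClass_strips_general
    {X Y : Type*} [TopologicalSpace X]
    [AddCommGroup Y] [Module ℝ Y] [MetricSpace Y]
    [IsTopologicalAddGroup Y] [ContinuousSMul ℝ Y] [LocallyConvexSpace ℝ Y]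
    (α : Ordinal) (hα1 : 1 ≤ α)
    (f : X → Y) (hf : IsBaireClass α f) :
    ∃ G : ℕ → Set (X × Y),
      (∀ n, IsSigmaClass α (G n)) ∧
      (∀ n, ∀ x : X, Convex ℝ {y : Y | (x, y) ∈ G n}) ∧
      (⋂ n, G n) = {p : X × Y | p.2 = f p.1} ∧
      (∀ x : X,
        Tendsto (fun n => EMetric.diam {y : Y | (x, y) ∈ G n}) atTop (𝓝 0)) := by
  obtain ⟨g, hg, hlim⟩ := hf.exists_tendsto (zero_lt_one.trans_le hα1).ne'
  obtain ⟨W, hW, hWlim⟩ :=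
    (LocallyConvexSpace.convex_open_basis_zero ℝ Y).exists_antitone_subbasis
  have hsmall (x : X) : Tendsto (fun n => W n + convexHull ℝ (range fun m => g (m + n) x))
      atTop (𝓝 (f x)).smallSets :=
    tendsto_add_convexHull_smallSets (p := fun j => g j x) hWlim.tendsto_smallSets (hlim x)
  have hgraph (x : X) (n : ℕ) : f x ∈ W n + convexHull ℝ (range fun m => g (m + n) x) :=
    mem_add_convexHull_of_tendsto ((hW n).2.1.mem_nhds (hW n).1)
      ((tendsto_add_atTop_iff_nat n).2 (hlim x))
  refine ⟨fun n => convexHullStrip (W n) fun m => g (m + n),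
    fun n => isSigmaClass_convexHullStrip (hW n).2.1 fun m => hg _, fun n x => ?_, ?_,
    fun x => ?_⟩
  · rw [setOf_mem_convexHullStrip]
    exact (hW n).2.2.add (convex_convexHull ℝ _)
  · ext ⟨x, y⟩
    have hsec := iInter_eq_singleton_of_tendsto_smallSets (hsmall x) (hgraph x)
    simpa only [convexHullStrip, mem_iInter, mem_ofPred_eq, mem_singleton_iff] using
      Set.ext_iff.1 hsec y
  · simp only [setOf_mem_convexHullStrip]
    exact tendsto_ediam_of_tendsto_smallSets (hsmall x)

/-- If `X` is a topological space, `Y` a Fréchet space (a locally convex real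
topological vector space whose topology comes from a complete translation-invariant metric),
`α ≥ 1` a countable ordinal and `f : X → Y` is Baire-`α`, then there is a sequence of
`Σ_α`-strips in `X × Y` whose intersection is the graph of `f` and whose vertical sections
above each `x` have diameter tending to `0`. -/
theorem baire_graph_sigmaClass_strips
    {X Y : Type*} [TopologicalSpace X]
    [AddCommGroup Y] [Module ℝ Y] [MetricSpace Y]
    [IsTopologicalAddGroup Y] [ContinuousSMul ℝ Y] [LocallyConvexSpace ℝ Y]
    [CompleteSpace Y]
    (hinv : ∀ a x y : Y, dist (a + x) (a + y) = dist x y)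
    (α : Ordinal) (hα : α.card ≤ Cardinal.aleph0) (hα1 : 1 ≤ α)
    (f : X → Y) (hf : IsBaireClass α f) :
    ∃ G : ℕ → Set (X × Y),
      (∀ n, IsSigmaClass α (G n)) ∧
      (∀ n, ∀ x : X, Convex ℝ {y : Y | (x, y) ∈ G n}) ∧
      (⋂ n, G n) = {p : X × Y | p.2 = f p.1} ∧
      (∀ x : X,
        Tendsto (fun n => EMetric.diam {y : Y | (x, y) ∈ G n}) atTop (𝓝 0)) :=
  baire_graph_sigmaClass_strips_general α hα1 f hf
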